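/- arXiv:1902.03173 — 2 statements merged into one kernel-verified Lean document; each statement's English description precedes it below -/
import Mathlib

section
/- Let δ > 0, κ ≥ 1, C > 0, c > 0 and γ(a,b) = ab/(δab + κb + C). Then log₂(1 + c·γ(a,b)) → log₂(1 + c/δ) as a,b → ∞, and moreover log₂(1 + c·γ(a,b)) < log₂(1 + c/δ) for all a,b > 0. -/
theorem capacity_tendsto_ceiling (δ κ C c : ℝ) (hδ : 0 < δ) (hκ : 1 ≤ κ)
    (hC : 0 < C) (hc : 0 < c) :
    (∀ ε > 0, ∃ M : ℝ, ∀ a b : ℝ, M < a → M < b →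
      |Real.logb 2 (1 + c * (a * b / (δ * (a * b) + κ * b + C))) -
        Real.logb 2 (1 + c / δ)| < ε) ∧
    (∀ a b : ℝ, 0 < a → 0 < b →
      Real.logb 2 (1 + c * (a * b / (δ * (a * b) + κ * b + C))) <
        Real.logb 2 (1 + c / δ)) := by
  have hκ0 : 0 < κ := lt_of_lt_of_le one_pos hκ
  -- basic facts about the fraction
  have hfrac : ∀ a b : ℝ, 0 < a → 0 < b →
      0 < a * b / (δ * (a * b) + κ * b + C) ∧
      a * b / (δ * (a * b) + κ * b + C) < 1 / δ := by
    intro a b ha hb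
    have hden : 0 < δ * (a * b) + κ * b + C := by positivity
    constructor
    · positivity
    · rw [div_lt_div_iff₀ hden hδ]
      nlinarith [mul_pos hκ0 hb]
  -- strict inequality part
  have hstrict : ∀ a b : ℝ, 0 < a → 0 < b →
      Real.logb 2 (1 + c * (a * b / (δ * (a * b) + κ * b + C))) <
        Real.logb 2 (1 + c / δ) := by
    intro a b ha hb
    obtain ⟨h0, h1⟩ := hfrac a b ha hb
    apply Real.logb_lt_logb (by norm_num)
    · positivity
    · have := mul_lt_mul_of_pos_left h1 hc
      rw [mul_one_div] at this
      linarith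
  refine ⟨?_, hstrict⟩
  intro ε hε
  -- continuity of the outer function at 1/δ
  have hcont : ContinuousAt (fun x : ℝ => Real.logb 2 (1 + c * x)) (1 / δ) := by
    have hpos : (0:ℝ) < 1 + c * (1 / δ) := by positivity
    have h1 : ContinuousAt (fun x : ℝ => 1 + c * x) (1 / δ) := by fun_prop
    have h2 : ContinuousAt (fun y : ℝ => Real.logb 2 y) (1 + c * (1 / δ)) := by
      unfold Real.logb
      exact (Real.continuousAt_log hpos.ne').div_const _
    exact ContinuousAt.comp (g := fun y : ℝ => Real.logb 2 y) h2 h1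
  obtain ⟨d, hd, hball⟩ := Metric.continuousAt_iff.mp hcont ε hε
  refine ⟨max 1 ((κ + C) / (δ ^ 2 * d)), ?_⟩
  intro a b ha hb
  have ha1 : (1:ℝ) < a := lt_of_le_of_lt (le_max_left _ _) ha
  have hb1 : (1:ℝ) < b := lt_of_le_of_lt (le_max_left _ _) hb
  have ha0 : 0 < a := by linarith
  have hb0 : 0 < b := by linarith
  have haM : (κ + C) / (δ ^ 2 * d) < a := lt_of_le_of_lt (le_max_right _ _) ha
  have hδ2d : 0 < δ ^ 2 * d := by positivity
  have haM' : κ + C < δ ^ 2 * d * a := by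
    rw [div_lt_iff₀ hδ2d] at haM
    linarith [haM]
  obtain ⟨h0, h1⟩ := hfrac a b ha0 hb0
  have hden : 0 < δ * (a * b) + κ * b + C := by positivity
  -- the fraction is within d of 1/δ
  have hclose : dist (a * b / (δ * (a * b) + κ * b + C)) (1 / δ) < d := by
    rw [Real.dist_eq, abs_sub_lt_iff]
    constructor
    · linarith
    · have key : 1 / δ - a * b / (δ * (a * b) + κ * b + C)
          = (κ * b + C) / (δ * (δ * (a * b) + κ * b + C)) := by
        field_simp
        ring
      have hlt : (κ * b + C) / (δ * (δ * (a * b) + κ * b + C)) < d := by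
        rw [div_lt_iff₀ (by positivity)]
        nlinarith [mul_lt_mul_of_pos_right haM' hb0,
          mul_lt_mul_of_pos_left hb1 hC,
          mul_pos (mul_pos hd hδ) hC,
          mul_pos (mul_pos (mul_pos hd hδ) hκ0) hb0]
      linarith [key, hlt]
  have := hball hclose
  rw [Real.dist_eq] at this
  simpa [mul_one_div, div_eq_mul_inv] using this
end

section
/- Let γ₁ and γ₂ be independent nonnegative random variables with finite positive means, δ > 0, κ ≥ 1, C > 0, c > 0, and γ_ni = γ₁γ₂/(δγ₁γ₂ + κγ₂ + C). Then E[log₂(1 + c·γ_ni)] ≤ log₂(1 + c·J/(Jδ + 1)) where J = E[γ₁]/(κ·E[1 + C/(κγ₂)]) ≤ E[γ₁]/κ, provided E[1/γ₂] < ∞. In particular E[log₂(1 + c·γ_ni)] ≤ log₂(1 + c·E[γ₁·γ₂/(κγ₂+C)]/(δ·E[γ₁·γ₂/(κγ₂+C)] + 1)). -/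
open MeasureTheory ProbabilityTheory

lemma g_tangent {δ x J : ℝ} (hδ : 0 < δ) (hx : 0 ≤ x) (hJ : 0 ≤ J) :
    x / (δ*x+1) - J / (δ*J+1) ≤ (x - J) / ((δ*J+1)^2) := by
  have hx1 : (0:ℝ) < δ*x+1 := by nlinarith
  have hJ1 : (0:ℝ) < δ*J+1 := by nlinarith
  have key : x/(δ*x+1) - J/(δ*J+1) = (x - J)/((δ*x+1)*(δ*J+1)) := by
    field_simp; ring
  rw [key, div_le_div_iff₀ (by positivity) (by positivity)]
  nlinarith [mul_nonneg (mul_nonneg hδ.le (sq_nonneg (x-J))) hJ1.le]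

lemma pointwise_bound {δ c x J : ℝ} (hδ : 0 < δ) (hc : 0 < c) (hx : 0 ≤ x) (hJ : 0 ≤ J) :
    Real.logb 2 (1 + c * (x / (δ*x+1))) ≤ Real.logb 2 (1 + c * J / (J*δ+1))
      + (c / ((1 + c * J / (J*δ+1)) * (δ*J+1)^2 * Real.log 2)) * (x - J) := by
  have hlog2 : (0:ℝ) < Real.log 2 := Real.log_pos (by norm_num)
  have hx1 : (0:ℝ) < δ*x+1 := by nlinarith
  have hJ1 : (0:ℝ) < δ*J+1 := by nlinarith
  set A := 1 + c * (x / (δ*x+1)) with hAdef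
  set B := 1 + c * J / (J*δ+1) with hBdef
  have hBJ : c * J / (J*δ+1) = c * (J / (δ*J+1)) := by
    rw [mul_comm J δ, mul_div_assoc]
  have hA : (0:ℝ) < A := by
    have : 0 ≤ c * (x / (δ*x+1)) := by positivity
    rw [hAdef]; linarith
  have hB : (0:ℝ) < B := by
    have : 0 ≤ c * (J / (δ*J+1)) := by positivity
    rw [hBdef, hBJ]; linarith
  have hAB : (0:ℝ) < A/B := div_pos hA hB
  have h2 := Real.log_le_sub_one_of_pos hAB
  rw [Real.log_div hA.ne' hB.ne'] at h2
  have h3 : A/B - 1 = (A-B)/B := by field_simp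
  rw [h3] at h2
  have h5 : A - B ≤ c*((x-J)/((δ*J+1)^2)) := by
    have hAB' : A - B = c*(x/(δ*x+1) - J/(δ*J+1)) := by
      rw [hAdef, hBdef, hBJ]; ring
    rw [hAB']
    exact mul_le_mul_of_nonneg_left (g_tangent hδ hx hJ) hc.le
  have hBL : (0:ℝ) < B * Real.log 2 := mul_pos hB hlog2
  have h6 : (A-B)/(B*Real.log 2) ≤ (c*((x-J)/((δ*J+1)^2)))/(B*Real.log 2) :=
    (div_le_div_iff_of_pos_right hBL).mpr h5
  have h7 : (c*((x-J)/((δ*J+1)^2)))/(B*Real.log 2)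
      = (c/(B*(δ*J+1)^2*Real.log 2))*(x-J) := by
    rw [← mul_div_assoc, div_div, div_mul_eq_mul_div]
    ring_nf
  have h8 : Real.log A / Real.log 2 ≤ Real.log B / Real.log 2 + (A-B)/(B*Real.log 2) := by
    have h9 := (div_le_div_iff_of_pos_right hlog2).mpr h2
    have heq : (Real.log A - Real.log B)/Real.log 2
        = Real.log A/Real.log 2 - Real.log B/Real.log 2 := by ring
    have heq2 : ((A-B)/B)/Real.log 2 = (A-B)/(B*Real.log 2) := div_div _ _ _
    rw [heq, heq2] at h9
    linarith
  have h10 : Real.log A / Real.log 2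
      ≤ Real.log B / Real.log 2 + (c/(B*(δ*J+1)^2*Real.log 2))*(x-J) := by
    have := h6.trans_eq h7
    linarith
  simpa [Real.logb] using h10

theorem ergodic_capacity_upper_bound {Ω' : Type*} [MeasureSpace Ω']
    [IsProbabilityMeasure (volume : Measure Ω')]
    (γ₁ γ₂ : Ω' → ℝ) (hγ₁m : Measurable γ₁) (hγ₂m : Measurable γ₂)
    (hγ₁pos : ∀ ω, 0 ≤ γ₁ ω) (hγ₂pos : ∀ ω, 0 ≤ γ₂ ω)
    (hindep : IndepFun γ₁ γ₂)
    (hγ₁int : Integrable γ₁) (hγ₂int : Integrable γ₂)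
    (hγ₁mean : 0 < ∫ ω, γ₁ ω) (hγ₂mean : 0 < ∫ ω, γ₂ ω)
    (hinvint : Integrable (fun ω => 1 / γ₂ ω))
    (δ κ C c : ℝ) (hδ : 0 < δ) (hκ : 1 ≤ κ) (hC : 0 < C) (hc : 0 < c)
    (J : ℝ) (hJ : J = (∫ ω, γ₁ ω) * ∫ ω, γ₂ ω / (κ * γ₂ ω + C)) :
    (∫ ω, Real.logb 2 (1 + c * (γ₁ ω * γ₂ ω / (δ * (γ₁ ω * γ₂ ω) + κ * γ₂ ω + C))))
      ≤ Real.logb 2 (1 + c * J / (J * δ + 1)) ∧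
    J ≤ (∫ ω, γ₁ ω) / κ := by
  have hκ0 : (0:ℝ) < κ := lt_of_lt_of_le one_pos hκ
  set g2 : Ω' → ℝ := fun ω => γ₂ ω / (κ * γ₂ ω + C) with hg2def
  have hD : ∀ ω, (0:ℝ) < κ * γ₂ ω + C := fun ω => by nlinarith [hγ₂pos ω]
  have hg2nn : ∀ ω, 0 ≤ g2 ω := fun ω => div_nonneg (hγ₂pos ω) (hD ω).le
  have hg2le : ∀ ω, g2 ω ≤ 1/κ := fun ω => by
    rw [div_le_div_iff₀ (hD ω) hκ0]
    nlinarith [hγ₂pos ω]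
  have hφm : Measurable (fun y : ℝ => y / (κ * y + C)) :=
    measurable_id.div ((measurable_const.mul measurable_id).add_const C)
  have hg2m : Measurable g2 := hφm.comp hγ₂m
  have hg2int : Integrable g2 := by
    refine (integrable_const (1/κ)).mono' hg2m.aestronglyMeasurable ?_
    filter_upwards with ω
    rw [Real.norm_eq_abs, abs_of_nonneg (hg2nn ω)]
    exact hg2le ω
  have hindep2 : IndepFun γ₁ g2 := hindep.comp measurable_id hφm
  set u : Ω' → ℝ := fun ω => γ₁ ω * g2 ω with hudef
  have hunn : ∀ ω, 0 ≤ u ω := fun ω => mul_nonneg (hγ₁pos ω) (hg2nn ω)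
  have huint : Integrable u := hindep2.integrable_mul hγ₁int hg2int
  have hEu : ∫ ω, u ω = J := by
    rw [hJ]
    exact hindep2.integral_fun_mul_eq_mul_integral hγ₁int.aestronglyMeasurable hg2int.aestronglyMeasurable
  have hJ0 : 0 ≤ J := by
    rw [← hEu]
    exact integral_nonneg hunn
  -- rewrite the integrand
  have hueq : ∀ ω, γ₁ ω * γ₂ ω / (δ * (γ₁ ω * γ₂ ω) + κ * γ₂ ω + C)
      = u ω / (δ * u ω + 1) := by
    intro ω
    have hDω := hD ω
    have hden : 0 < δ * (γ₁ ω * γ₂ ω) + κ * γ₂ ω + C := by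
      nlinarith [mul_nonneg (hγ₁pos ω) (hγ₂pos ω)]
    have hu : 0 ≤ γ₁ ω * (γ₂ ω / (κ * γ₂ ω + C)) :=
      mul_nonneg (hγ₁pos ω) (div_nonneg (hγ₂pos ω) hDω.le)
    have hden2 : 0 < δ * (γ₁ ω * (γ₂ ω / (κ * γ₂ ω + C))) + 1 := by nlinarith
    rw [hudef]
    simp only [hg2def]
    rw [div_eq_div_iff hden.ne' hden2.ne']
    field_simp
    ring_nf
    have hne : γ₂ ω * κ + C ≠ 0 := by linarith
    linear_combination (-(γ₁ ω * γ₂ ω)) * (mul_inv_cancel₀ hne)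
  constructor
  · -- main inequality
    set B := Real.logb 2 (1 + c * J / (J * δ + 1)) with hBdef
    set K := c / ((1 + c * J / (J * δ + 1)) * (δ*J+1)^2 * Real.log 2) with hKdef
    have hKint : Integrable (fun ω => K * (u ω - J)) := by
      exact (huint.sub (integrable_const J)).const_mul K
    have hgint : Integrable (fun ω => B + K * (u ω - J)) := (integrable_const B).add hKint
    have hle : ∀ ω, Real.logb 2 (1 + c * (γ₁ ω * γ₂ ω / (δ * (γ₁ ω * γ₂ ω) + κ * γ₂ ω + C)))
        ≤ B + K * (u ω - J) := by
      intro ω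
      rw [hueq ω]
      exact pointwise_bound hδ hc (hunn ω) hJ0
    have hnn : ∀ ω, 0 ≤ Real.logb 2 (1 + c * (γ₁ ω * γ₂ ω / (δ * (γ₁ ω * γ₂ ω) + κ * γ₂ ω + C))) := by
      intro ω
      apply Real.logb_nonneg (by norm_num)
      have hden : 0 < δ * (γ₁ ω * γ₂ ω) + κ * γ₂ ω + C := by
        nlinarith [mul_nonneg (hγ₁pos ω) (hγ₂pos ω), hD ω]
      have : 0 ≤ c * (γ₁ ω * γ₂ ω / (δ * (γ₁ ω * γ₂ ω) + κ * γ₂ ω + C)) :=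
        mul_nonneg hc.le (div_nonneg (mul_nonneg (hγ₁pos ω) (hγ₂pos ω)) hden.le)
      linarith
    have hmono := integral_mono_of_nonneg (Filter.Eventually.of_forall hnn) hgint
        (Filter.Eventually.of_forall hle)
    have hsub : ∫ ω, (u ω - J) = 0 := by
      rw [integral_sub huint (integrable_const J), hEu, integral_const]
      simp
    have hmul : ∫ ω, K * (u ω - J) = K * ∫ ω, (u ω - J) := integral_const_mul K _
    have hcomp : ∫ ω, (B + K * (u ω - J)) = B := by
      rw [integral_add (integrable_const B) hKint, hmul, hsub, integral_const]
      simp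
    calc (∫ ω, Real.logb 2 (1 + c * (γ₁ ω * γ₂ ω / (δ * (γ₁ ω * γ₂ ω) + κ * γ₂ ω + C))))
        ≤ ∫ ω, (B + K * (u ω - J)) := hmono
      _ = B := hcomp
  · -- J ≤ E γ₁ / κ
    have h1 : ∫ ω, g2 ω ≤ 1/κ := by
      calc ∫ ω, g2 ω ≤ ∫ _ω, (1/κ : ℝ) := integral_mono hg2int (integrable_const _)
            (fun ω => hg2le ω)
        _ = 1/κ := by simp
    rw [hJ]
    have : (∫ ω, γ₁ ω) * ∫ ω, γ₂ ω / (κ * γ₂ ω + C) ≤ (∫ ω, γ₁ ω) * (1/κ) :=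
      mul_le_mul_of_nonneg_left h1 hγ₁mean.le
    linarith [this, (by ring : (∫ ω, γ₁ ω) * (1/κ) = (∫ ω, γ₁ ω) / κ)]
end
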